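/- Let A be a feasible tree solution and F a feasible solution with V[A]=V[F], and let e,f ∈ A be two edges that are compatible w.r.t. F. Then e is safe if and only if f is safe. -/

import Mathlib

open Finset

attribute [local instance] Classical.propDecidable

variable {V : Type*} [Fintype V] [DecidableEq V]

/-- The simple graph on `V` induced by a finite set of (undirected) edges. -/
def graphOf (F : Finset (Sym2 V)) : SimpleGraph V where
  Adj u v := u ≠ v ∧ s(u, v) ∈ F
  symm := by
    constructor
    intro u v h
    refine ⟨Ne.symm h.1, ?_⟩
    rw [Sym2.eq_swap]
    exact h.2
  loopless := by constructor; intro v h; exact h.1 rfl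

/-- The set of vertices incident to at least one edge of `F` (denoted `V[F]` in the paper). -/
def supp (F : Finset (Sym2 V)) : Set V := {v | ∃ e ∈ F, v ∈ e}

/-- A Steiner forest `F` is feasible for the terminal pairs `T` if it connects every pair. -/
def Feasible (F : Finset (Sym2 V)) (T : Finset (V × V)) : Prop :=
  ∀ p ∈ T, (graphOf F).Reachable p.1 p.2

/-- Total edge cost `d(F)`. -/
def cost (d : Sym2 V → ℝ) (F : Finset (Sym2 V)) : ℝ := ∑ e ∈ F, d e

/-- `A` is a tree (on its vertex support): loopless edges, acyclic, connected on `V[A]`. -/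
def IsTreeSol (A : Finset (Sym2 V)) : Prop :=
  (∀ e ∈ A, ¬ e.IsDiag) ∧ (graphOf A).IsAcyclic ∧
    ∀ u ∈ supp A, ∀ v ∈ supp A, (graphOf A).Reachable u v

/-- Shortest-path distance between `u` and `v` in the graph with edge set `Eall`
and edge lengths `d`. -/
noncomputable def wdist (Eall : Finset (Sym2 V)) (d : Sym2 V → ℝ) (u v : V) : ℝ :=
  ⨅ p : (graphOf Eall).Walk u v, (p.edges.map d).sum

/-- Width of a vertex set `W`: the largest shortest-path distance of a terminal pair
whose two members both lie in `W`. -/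
noncomputable def widthSet (Eall : Finset (Sym2 V)) (d : Sym2 V → ℝ) (T : Finset (V × V))
    (W : Set V) : ℝ :=
  sSup {x : ℝ | ∃ p ∈ T, p.1 ∈ W ∧ p.2 ∈ W ∧ x = wdist Eall d p.1 p.2}

/-- Total width `w(F)`: the sum of the widths of the connected components of `F`. -/
noncomputable def totalWidth (Eall : Finset (Sym2 V)) (d : Sym2 V → ℝ) (T : Finset (V × V))
    (F : Finset (Sym2 V)) : ℝ :=
  ∑ᶠ c : (graphOf F).ConnectedComponent, widthSet Eall d T c.supp

/-- The potential `φ(F) = d(F) + w(F)`. -/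
noncomputable def phi (Eall : Finset (Sym2 V)) (d : Sym2 V → ℝ) (T : Finset (V × V))
    (F : Finset (Sym2 V)) : ℝ :=
  cost d F + totalWidth Eall d T F

/-- Some edge of `F` leaves the vertex set `W`. -/
def leavesSet (F : Finset (Sym2 V)) (W : Set V) : Prop :=
  ∃ g ∈ F, ∃ x y : V, g = s(x, y) ∧ x ∈ W ∧ y ∉ W

/-- `T_{e,f}`: the connected component of `A ∖ {e,f}` containing the interior of the
unique `e`–`f` path of the tree `A`; equivalently, the component containing an endpoint
of `e` together with an endpoint of `f`. -/
def midComp (A : Finset (Sym2 V)) (e f : Sym2 V) : Set V :=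
  {v | ∃ x ∈ e, ∃ y ∈ f,
    (graphOf (A \ {e, f})).Reachable x y ∧ (graphOf (A \ {e, f})).Reachable x v}

/-- `e` and `f` are compatible w.r.t. `F` (`e ~cp f`). -/
def Compatible (A F : Finset (Sym2 V)) (e f : Sym2 V) : Prop :=
  e = f ∨ ¬ leavesSet F (midComp A e f)

/-- `e` is safe: some `F`-edge crosses between the two components of `A ∖ {e}`. -/
def Safe (A F : Finset (Sym2 V)) (e : Sym2 V) : Prop :=
  ∃ g ∈ F, ∃ x y : V, g = s(x, y) ∧ x ≠ y ∧ ¬ (graphOf (A.erase e)).Reachable x y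

/-- `e` is essential: removing it from `A` destroys feasibility. -/
def Essential (A : Finset (Sym2 V)) (T : Finset (V × V)) (e : Sym2 V) : Prop :=
  ¬ Feasible (A.erase e) T

/-- The compatibility class of the edge `e` of `A`. -/
noncomputable def cls (A F : Finset (Sym2 V)) (e : Sym2 V) : Finset (Sym2 V) :=
  A.filter (fun f => Compatible A F e f)

/-- `S_u`: the set of unsafe edges of `A`. -/
noncomputable def unsafeCls (A F : Finset (Sym2 V)) : Finset (Sym2 V) :=
  A.filter (fun e => ¬ Safe A F e)

/-- `𝔖`: the set of compatibility classes of edges of `A`. -/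
noncomputable def classes (A F : Finset (Sym2 V)) : Finset (Finset (Sym2 V)) :=
  A.image (cls A F)

/-- `e` lies on the fundamental cycle closed by adding the edge `f` to the tree `A`. -/
def onFundCycle (A : Finset (Sym2 V)) (f e : Sym2 V) : Prop :=
  e ∈ A ∧ ∀ x y : V, f = s(x, y) →
    (graphOf A).Reachable x y ∧ ¬ (graphOf (A.erase e)).Reachable x y

/-- Edge/edge swap optimality of `A` w.r.t. added edges from `Eadd` and objective `obj`:
no swap that adds an edge `f ∈ Eadd` and removes one edge of the cycle it closes,
keeping feasibility, strictly decreases the objective. -/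
def EdgeEdgeSwapOptimal (Eadd : Finset (Sym2 V)) (T : Finset (V × V))
    (obj : Finset (Sym2 V) → ℝ) (A : Finset (Sym2 V)) : Prop :=
  ∀ f ∈ Eadd, ∀ e, onFundCycle A f e →
    Feasible (A.erase e ∪ {f}) T → obj A ≤ obj (A.erase e ∪ {f})

/-- Edge/set swap optimality of `A` w.r.t. added edges from `Eadd` and objective `obj`:
no swap that adds an edge `f ∈ Eadd` and removes a set `S` of edges of the cycle it closes,
keeping feasibility, strictly decreases the objective. -/
def EdgeSetSwapOptimal (Eadd : Finset (Sym2 V)) (T : Finset (V × V))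
    (obj : Finset (Sym2 V) → ℝ) (A : Finset (Sym2 V)) : Prop :=
  ∀ f ∈ Eadd, ∀ S ⊆ A, (∀ e ∈ S, onFundCycle A f e) →
    Feasible ((A \ S) ∪ {f}) T → obj A ≤ obj ((A \ S) ∪ {f})

/-- Removing swap optimality: deleting any (feasibility preserving) edge set from `A`
does not strictly decrease the objective. -/
def RemovingSwapOptimal (T : Finset (V × V))
    (obj : Finset (Sym2 V) → ℝ) (A : Finset (Sym2 V)) : Prop :=
  ∀ S ⊆ A, Feasible (A \ S) T → obj A ≤ obj (A \ S)

/-- Path/set swap optimality of `A`: for vertices `u, v` in the same component of `A`,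
adding a set `P ⊆ Eadd` of edges (along a `u`–`v` connection) and removing a set `S` of
edges of the component of `u`, in a way that keeps `u,v` connected and the solution
feasible, does not strictly decrease the objective. -/
def PathSetSwapOptimal (Eadd : Finset (Sym2 V)) (T : Finset (V × V))
    (obj : Finset (Sym2 V) → ℝ) (A : Finset (Sym2 V)) : Prop :=
  ∀ u v : V, (graphOf A).Reachable u v →
    ∀ P : Finset (Sym2 V), P ⊆ Eadd → ∀ S ⊆ A,
      (∀ e ∈ S, ∃ x ∈ e, (graphOf A).Reachable u x) →
      (graphOf ((A \ S) ∪ P)).Reachable u v →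
      Feasible ((A \ S) ∪ P) T → obj A ≤ obj ((A \ S) ∪ P)

/-- A connected component `c` of `A ∖ S` is an *inner* component for the class `S`
if it touches (at least) two distinct edges of `S`. -/
def innerComp (A S : Finset (Sym2 V)) (c : (graphOf (A \ S)).ConnectedComponent) : Prop :=
  ∃ e ∈ S, ∃ e' ∈ S, e ≠ e' ∧ (∃ x ∈ e, (graphOf (A \ S)).connectedComponentMk x = c) ∧
    ∃ y ∈ e', (graphOf (A \ S)).connectedComponentMk y = c

/-- The sum of the widths of the inner components `E_{S,i}`, `i ∈ In_S`, of the class `S`. -/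
noncomputable def innerWidthSum (Eall : Finset (Sym2 V)) (d : Sym2 V → ℝ) (T : Finset (V × V))
    (A S : Finset (Sym2 V)) : ℝ :=
  ∑ᶠ c : (graphOf (A \ S)).ConnectedComponent,
    if innerComp A S c then widthSet Eall d T c.supp else 0

/-- `index(E')` for a vertex set `W`: the largest index `i` (in the enumeration `tp` of the
terminal pairs by nondecreasing distance) of a terminal pair lying entirely inside `W`. -/
noncomputable def idxOf {nt : ℕ} (tp : Fin nt → V × V) (W : Set V) : ℕ :=
  sSup {i : ℕ | ∃ h : i < nt, (tp ⟨i, h⟩).1 ∈ W ∧ (tp ⟨i, h⟩).2 ∈ W}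

/-- The finite vertex support of an edge set. -/
def suppF (B : Finset (Sym2 V)) : Finset V :=
  Finset.univ.filter (fun v => ∃ e ∈ B, v ∈ e)

/-- `e` crosses between two different connected components of `A`. -/
def crossingEdge (A : Finset (Sym2 V)) (e : Sym2 V) : Prop :=
  ∀ x y : V, e = s(x, y) → ¬ (graphOf A).Reachable x y

/-- The components of `A` touched by the edge set `B`, i.e. the nodes of `G_A`
incident to `B`. -/
noncomputable def touched (A B : Finset (Sym2 V)) :
    Finset ((graphOf A).ConnectedComponent) :=
  (suppF B).image ((graphOf A).connectedComponentMk)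

/-- `B` is (the edge set of) a tree in the contracted multigraph `G_A`: all its edges cross
between components of `A`, it is connected (through the components of `A` it touches), and
it has one edge less than the number of components it touches. -/
def IsGATree (A B : Finset (Sym2 V)) : Prop :=
  (∀ e ∈ B, crossingEdge A e) ∧ (touched A B).card = B.card + 1 ∧
    ∀ x ∈ suppF B, ∀ y ∈ suppF B, (graphOf (A ∪ B)).Reachable x y

/-- `A` is `c`-approximate connecting move optimal: for every tree `B` in `G_A` (with edges
taken from `Emoves`), the total width of the components it connects, minus the largest of
these widths, is at most `c` times the length of the tree. -/
def ConnApproxOptimal (Emoves Eall : Finset (Sym2 V)) (d : Sym2 V → ℝ) (T : Finset (V × V))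
    (c : ℝ) (A : Finset (Sym2 V)) : Prop :=
  ∀ B ⊆ Emoves, IsGATree A B →
    (∑ t ∈ touched A B, widthSet Eall d T t.supp)
      - (⨆ t ∈ touched A B, widthSet Eall d T t.supp) ≤ c * ∑ e ∈ B, d e

/-! Removing `e` and `f` from the tree leaves the middle piece `T_{e,f}` between them. Inside
`T_{e,f}` any two vertices stay connected after deleting either edge, and outside it two
vertices are separated by `e` exactly when they are separated by `f`: a path avoiding `f` but
using `e` would connect one of its ends to `T_{e,f}`. Compatibility says every `F`-edge lies
inside or outside `T_{e,f}`, so an `F`-edge crosses `e` iff it crosses `f`. -/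

section Reachability

omit [Fintype V]

variable {B C : Finset (Sym2 V)}

omit [DecidableEq V] in
lemma graphOf_mono (h : B ⊆ C) : graphOf B ≤ graphOf C :=
  fun _ _ huv => ⟨huv.1, h huv.2⟩

omit [DecidableEq V] in
lemma reachable_of_mem_of_mem {g : Sym2 V} (hg : g ∈ B) {x y : V} (hx : x ∈ g) (hy : y ∈ g) :
    (graphOf B).Reachable x y := by
  rcases eq_or_ne x y with rfl | hxy
  · rfl
  · exact SimpleGraph.Adj.reachable ⟨hxy, (Sym2.mem_and_mem_iff hxy).mp ⟨hx, hy⟩ ▸ hg⟩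

lemma reachable_erase_or (c d : V) {x y : V} (h : (graphOf B).Reachable x y) :
    (graphOf (B.erase s(c, d))).Reachable x y ∨
      ((graphOf (B.erase s(c, d))).Reachable x c ∧ (graphOf (B.erase s(c, d))).Reachable d y) ∨
      ((graphOf (B.erase s(c, d))).Reachable x d ∧ (graphOf (B.erase s(c, d))).Reachable c y) := by
  obtain ⟨w⟩ := h
  induction w with
  | nil => exact Or.inl .rfl
  | @cons u v _ huv _ ih =>
    by_cases hcd : s(u, v) = s(c, d)
    · rcases Sym2.eq_iff.mp hcd with ⟨rfl, rfl⟩ | ⟨rfl, rfl⟩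
      · rcases ih with h | ⟨-, h⟩ | ⟨-, h⟩
        · exact Or.inr (Or.inl ⟨.rfl, h⟩)
        · exact Or.inr (Or.inl ⟨.rfl, h⟩)
        · exact Or.inl h
      · rcases ih with h | ⟨-, h⟩ | ⟨-, h⟩
        · exact Or.inr (Or.inr ⟨.rfl, h⟩)
        · exact Or.inl h
        · exact Or.inr (Or.inr ⟨.rfl, h⟩)
    · have hadj : (graphOf (B.erase s(c, d))).Adj u v := ⟨huv.1, mem_erase.mpr ⟨hcd, huv.2⟩⟩
      rcases ih with h | ⟨h, h'⟩ | ⟨h, h'⟩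
      · exact Or.inl (hadj.reachable.trans h)
      · exact Or.inr (Or.inl ⟨hadj.reachable.trans h, h'⟩)
      · exact Or.inr (Or.inr ⟨hadj.reachable.trans h, h'⟩)

lemma exists_mem_reachable_erase {g : Sym2 V} {x y : V} (hx : x ∈ g)
    (h : (graphOf B).Reachable x y) : ∃ z ∈ g, (graphOf (B.erase g)).Reachable z y := by
  induction g using Sym2.ind with
  | h c d =>
    rcases reachable_erase_or c d h with h | ⟨-, h⟩ | ⟨-, h⟩
    · exact ⟨x, hx, h⟩
    · exact ⟨d, Sym2.mem_mk_right c d, h⟩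
    · exact ⟨c, Sym2.mem_mk_left c d, h⟩

end Reachability

section MidComp

omit [Fintype V]

variable {A F : Finset (Sym2 V)} {e f : Sym2 V}

lemma sdiff_pair_eq_erase_erase (A : Finset (Sym2 V)) (e f : Sym2 V) :
    A \ {e, f} = (A.erase f).erase e := by
  rw [sdiff_insert, sdiff_singleton_eq_erase]

lemma midComp_comm (A : Finset (Sym2 V)) (e f : Sym2 V) : midComp A f e = midComp A e f := by
  ext v
  simp only [midComp, Set.mem_ofPred_eq, pair_comm f e]
  constructor <;>
  · rintro ⟨x, hx, y, hy, hxy, hxv⟩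
    exact ⟨y, hy, x, hx, hxy.symm, hxy.symm.trans hxv⟩

lemma exists_reachable_sdiff_pair
    (hconn : ∀ u ∈ supp A, ∀ v ∈ supp A, (graphOf A).Reachable u v) (he : e ∈ A) (hf : f ∈ A) :
    ∃ x ∈ e, ∃ y ∈ f, (graphOf (A \ {e, f})).Reachable x y := by
  have ha := e.out_fst_mem
  have hc := f.out_fst_mem
  obtain ⟨x, hx, hxc⟩ :=
    exists_mem_reachable_erase ha (hconn _ ⟨e, he, ha⟩ _ ⟨f, hf, hc⟩)
  obtain ⟨y, hy, hyx⟩ := exists_mem_reachable_erase hc hxc.symm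
  refine ⟨x, hx, y, hy, ?_⟩
  rw [sdiff_pair_eq_erase_erase, erase_right_comm]
  exact hyx.symm

lemma reachable_erase_of_mem_midComp (hf : f ∈ A) (hef : e ≠ f) {u v : V}
    (hu : u ∈ midComp A e f) (hv : v ∈ midComp A e f) : (graphOf (A.erase e)).Reachable u v := by
  obtain ⟨x, -, y, hy, hxy, hxu⟩ := hu
  obtain ⟨x', -, y', hy', hxy', hxv⟩ := hv
  have hle : graphOf (A \ {e, f}) ≤ graphOf (A.erase e) := by
    rw [sdiff_pair_eq_erase_erase, erase_right_comm]
    exact graphOf_mono (erase_subset _ _)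
  have hyy' := reachable_of_mem_of_mem (mem_erase.mpr ⟨hef.symm, hf⟩) hy hy'
  exact ((hxu.symm.trans hxy).mono hle).trans (hyy'.trans ((hxy'.symm.trans hxv).mono hle))

lemma reachable_erase_of_reachable_erase_of_notMem_midComp
    (hlink : ∃ x ∈ e, ∃ y ∈ f, (graphOf (A \ {e, f})).Reachable x y) {u v : V}
    (hu : u ∉ midComp A e f) (hv : v ∉ midComp A e f) (h : (graphOf (A.erase f)).Reachable u v) :
    (graphOf (A.erase e)).Reachable u v := by
  obtain ⟨z, hz, y, hy, hzy⟩ := hlink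
  have hmem : ∀ w, (graphOf (A \ {e, f})).Reachable z w → w ∈ midComp A e f :=
    fun w hw => ⟨z, hz, y, hy, hzy, hw⟩
  rw [sdiff_pair_eq_erase_erase] at hmem
  induction e using Sym2.ind with
  | h a b =>
    rcases reachable_erase_or a b h with h | ⟨hua, hbv⟩ | ⟨hub, hav⟩
    · rw [erase_right_comm] at h
      exact h.mono (graphOf_mono (erase_subset _ _))
    · rcases Sym2.mem_iff.mp hz with rfl | rfl
      · exact absurd (hmem u hua.symm) hu
      · exact absurd (hmem v hbv) hv
    · rcases Sym2.mem_iff.mp hz with rfl | rfl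
      · exact absurd (hmem v hav) hv
      · exact absurd (hmem u hub.symm) hu

theorem safe_of_safe_of_not_leavesSet
    (hconn : ∀ u ∈ supp A, ∀ v ∈ supp A, (graphOf A).Reachable u v) (he : e ∈ A) (hf : f ∈ A)
    (hef : e ≠ f) (hnl : ¬ leavesSet F (midComp A e f)) (hsafe : Safe A F e) : Safe A F f := by
  obtain ⟨g, hg, x, y, rfl, hxy, hsep⟩ := hsafe
  by_cases hx : x ∈ midComp A e f
  · have hy : y ∈ midComp A e f := by
      by_contra hy
      exact hnl ⟨_, hg, x, y, rfl, hx, hy⟩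
    exact absurd (reachable_erase_of_mem_midComp hf hef hx hy) hsep
  · have hy : y ∉ midComp A e f := fun hy => hnl ⟨_, hg, y, x, Sym2.eq_swap, hy, hx⟩
    refine ⟨_, hg, x, y, rfl, hxy, fun h => hsep ?_⟩
    exact reachable_erase_of_reachable_erase_of_notMem_midComp
      (exists_reachable_sdiff_pair hconn he hf) hx hy h

end MidComp

theorem stmt4_safe_all_or_none_general
    (A F : Finset (Sym2 V))
    (hAtree : IsTreeSol A)
    (e f : Sym2 V) (he : e ∈ A) (hf : f ∈ A)
    (hef : Compatible A F e f) :
    Safe A F e ↔ Safe A F f := by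
  rcases eq_or_ne e f with rfl | hne
  · rfl
  have hnl : ¬ leavesSet F (midComp A e f) := hef.resolve_left hne
  have hconn := hAtree.2.2
  exact ⟨safe_of_safe_of_not_leavesSet hconn he hf hne hnl,
    safe_of_safe_of_not_leavesSet hconn hf he hne.symm (by rwa [midComp_comm])⟩

theorem stmt4_safe_all_or_none
    (T : Finset (V × V)) (A F : Finset (Sym2 V))
    (hAfeas : Feasible A T) (hFfeas : Feasible F T)
    (hAtree : IsTreeSol A) (hsupp : supp A = supp F)
    (e f : Sym2 V) (he : e ∈ A) (hf : f ∈ A)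
    (hef : Compatible A F e f) :
    Safe A F e ↔ Safe A F f :=
  stmt4_safe_all_or_none_general A F hAtree e f he hf hef
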